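/- Fix N ≥ 1 and k > 0, and let G : ℝ^N → ℝ^N be differentiable with each component G_i convex. Let (M, U) : [0, T) → ℝ^N × ℝ^N be a differentiable solution of the discrete Hessian Riemannian flow with all m_j(t) > 0 and (1/N)Σ_{j=1}^N m_j(t) = 1 for all t ∈ [0, T). Let (M*, U*) ∈ ℝ^N × ℝ^N satisfy F̃(M*, U*) = 0 with all m*_j > 0 and (1/N)Σ_{j=1}^N m*_j = 1. Then the function φ̄(t) = (1/N)Σ_{j=1}^N m*_j ln(m*_j / m_j(t)) + (1/(2N))Σ_{j=1}^N (u_j(t) − u*_j)² is nonnegative and nonincreasing on [0, T). -/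

import Mathlib

/-!
Along the flow, `φ̄' = (1/N) (∑ⱼ m*ⱼ F̃₁(M,U)ⱼ - ⟨U - U*, DG(U)ᵀ M⟩)`. Since `H̃(M,U)` is the
`M`-weighted mean of `Gᵢ(U) - (1/k) ln mᵢ`, we have `∑ⱼ mⱼ F̃₁(M,U)ⱼ = 0`; together with
`F̃₁(M*,U*) = 0` and equal masses, the first sum becomes `∑ⱼ (m*ⱼ - mⱼ) (F̃₁(M,U)ⱼ - F̃₁(M*,U*)ⱼ)`,
in which both Hamiltonians cancel. What is left is `(1/k) ∑ⱼ (m*ⱼ - mⱼ)(ln mⱼ - ln m*ⱼ) ≤ 0`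
(monotonicity of `ln`) plus a `G`-part bounded by the gradient inequality for the convex `Gᵢ`,
applied at `U` with weights `M` and at `U*` with weights `M*`, where `DG(U*)ᵀ M* = 0`.
Nonnegativity of `φ̄` is Gibbs' inequality `a ln(a/b) ≥ a - b`.
-/

/-- The discrete entropy-penalized effective Hamiltonian
`H̃(M,U) = (∑ᵢ (mᵢ Gᵢ(U) − (1/k) mᵢ ln mᵢ)) / (∑ᵢ mᵢ)`. -/
noncomputable def Htilde {N : ℕ} (k : ℝ) (G : (Fin N → ℝ) → (Fin N → ℝ))
    (M U : Fin N → ℝ) : ℝ :=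
  (∑ i, (M i * G U i - (1 / k) * (M i * Real.log (M i)))) / ∑ i, M i

/-- First block of `F̃(M,U)`: `(−Gᵢ(U) + H̃(M,U) + (1/k) ln mᵢ)ᵢ`. -/
noncomputable def Ftilde1 {N : ℕ} (k : ℝ) (G : (Fin N → ℝ) → (Fin N → ℝ))
    (M U : Fin N → ℝ) (i : Fin N) : ℝ :=
  -(G U i) + Htilde k G M U + (1 / k) * Real.log (M i)

/-- Second block of `F̃(M,U)` (and of `F̄(M,U)`): the vector `DG(U)ᵀ M`. -/
noncomputable def Ftilde2 {N : ℕ} (G : (Fin N → ℝ) → (Fin N → ℝ))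
    (M U : Fin N → ℝ) (j : Fin N) : ℝ :=
  ∑ i, M i * (fderiv ℝ G U) (Pi.single j 1) i

/-- First block of `F̄(M,U)`: `(mᵢ(−Gᵢ(U) + H̃(M,U) + (1/k) ln mᵢ))ᵢ`. -/
noncomputable def Fbar1 {N : ℕ} (k : ℝ) (G : (Fin N → ℝ) → (Fin N → ℝ))
    (M U : Fin N → ℝ) (i : Fin N) : ℝ :=
  M i * Ftilde1 k G M U i

open Finset Real

theorem ConvexOn.add_fderiv_sub_le {E : Type*} [NormedAddCommGroup E] [NormedSpace ℝ E]
    {s : Set E} {f : E → ℝ} {f' : E →L[ℝ] ℝ} {x y : E} (hf : ConvexOn ℝ s f)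
    (hx : x ∈ s) (hy : y ∈ s) (hf' : HasFDerivAt f f' x) : f x + f' (y - x) ≤ f y := by
  set ℓ : ℝ →ᵃ[ℝ] E := AffineMap.lineMap x y
  have hseg : Set.Icc (0 : ℝ) 1 ⊆ ℓ ⁻¹' s := fun t ht =>
    hf.1.segment_subset hx hy (segment_eq_image_lineMap ℝ x y ▸ ⟨t, ht, rfl⟩)
  have hfℓ : HasDerivAt (f ∘ ℓ) (f' (y - x)) 0 :=
    (by simpa [ℓ] using hf' : HasFDerivAt f f' (ℓ 0)).comp_hasDerivAt 0
      AffineMap.hasDerivAt_lineMap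
  have := ((hf.comp_affineMap ℓ).subset hseg (convex_Icc 0 1)).le_slope_of_hasDerivAt
    ⟨le_rfl, zero_le_one⟩ ⟨zero_le_one, le_rfl⟩ one_pos hfℓ
  simp only [slope_def_field, Function.comp_apply, ℓ, AffineMap.lineMap_apply_one,
    AffineMap.lineMap_apply_zero, sub_zero, div_one] at this
  linarith

theorem sub_le_mul_log_div {a b : ℝ} (ha : 0 ≤ a) (hb : 0 < b) : a - b ≤ a * log (a / b) := by
  have := mul_le_mul_of_nonneg_left (self_sub_one_le_mul_log (div_nonneg ha hb.le)) hb.le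
  rwa [mul_sub, mul_div_cancel₀ _ hb.ne', mul_one, ← mul_assoc, mul_div_cancel₀ _ hb.ne'] at this

theorem sub_mul_log_sub_log_nonneg {a b : ℝ} (ha : 0 < a) (hb : 0 < b) :
    0 ≤ (a - b) * (log a - log b) := by
  rcases le_total a b with hab | hab
  · exact mul_nonneg_of_nonpos_of_nonpos (by linarith) (by linarith [log_le_log ha hab])
  · exact mul_nonneg (by linarith) (by linarith [log_le_log hb hab])

theorem HasDerivAt.const_mul_log_const_div {f : ℝ → ℝ} {f' c t : ℝ} (hf : HasDerivAt f f' t)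
    (hc : c ≠ 0) (ht : f t ≠ 0) :
    HasDerivAt (fun s => c * Real.log (c / f s)) (-(c * f' / f t)) t := by
  refine ((((hasDerivAt_const t c).fun_div hf ht).log (div_ne_zero hc ht)).const_mul c
    ).congr_deriv ?_
  field_simp
  ring

section Flow

variable {N : ℕ} {k : ℝ} {G : (Fin N → ℝ) → (Fin N → ℝ)}

theorem sum_mul_Ftilde2 (M U w : Fin N → ℝ) :
    ∑ j, w j * Ftilde2 G M U j = ∑ i, M i * fderiv ℝ G U w i := by
  conv_rhs => rw [pi_eq_sum_univ' w]
  simp only [map_sum, map_smul, Finset.sum_apply, Pi.smul_apply, smul_eq_mul, Ftilde2, mul_sum]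
  rw [sum_comm]
  exact sum_congr rfl fun _ _ => sum_congr rfl fun _ _ => by ring

theorem sum_sub_mul_Ftilde2_le {U : Fin N → ℝ} (hG : DifferentiableAt ℝ G U)
    (hconv : ∀ i, ConvexOn ℝ Set.univ (fun U => G U i)) {M : Fin N → ℝ} (hM : ∀ i, 0 ≤ M i)
    (V : Fin N → ℝ) : ∑ j, (V j - U j) * Ftilde2 G M U j ≤ ∑ i, M i * (G V i - G U i) := by
  rw [sum_mul_Ftilde2]
  refine sum_le_sum fun i _ => mul_le_mul_of_nonneg_left ?_ (hM i)
  have := (hconv i).add_fderiv_sub_le (y := V) trivial trivial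
    (hasFDerivAt_pi'.1 hG.hasFDerivAt i)
  exact le_sub_iff_add_le'.2 this

theorem sum_mul_Ftilde1_self (M U : Fin N → ℝ) (hM : ∑ i, M i ≠ 0) :
    ∑ i, M i * Ftilde1 k G M U i = 0 := by
  simp only [Ftilde1, Htilde, mul_add, sum_add_distrib, ← sum_mul, sum_sub_distrib, ← mul_sum,
    mul_neg, sum_neg_distrib, mul_left_comm _ (1 / k)]
  field_simp
  ring

theorem sum_sub_mul_Ftilde1_sub {m u μ v : Fin N → ℝ} (hsum : ∑ i, μ i = ∑ i, m i) :
    ∑ i, (μ i - m i) * (Ftilde1 k G m u i - Ftilde1 k G μ v i)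
      = ∑ i, (μ i - m i) * (G v i - G u i + (1 / k) * (log (m i) - log (μ i))) := by
  have hsplit : ∀ i, (μ i - m i) * (Ftilde1 k G m u i - Ftilde1 k G μ v i)
      = (μ i - m i) * (G v i - G u i + (1 / k) * (log (m i) - log (μ i)))
        + (μ i - m i) * (Htilde k G m u - Htilde k G μ v) := fun i => by
    simp only [Ftilde1]; ring
  simp only [hsplit, sum_add_distrib, ← sum_mul, sum_sub_distrib, hsum, sub_self, zero_mul,
    add_zero]

theorem sum_mul_Ftilde1_sub_sum_mul_Ftilde2_nonpos (hk : 0 < k) (hG : Differentiable ℝ G)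
    (hconv : ∀ i, ConvexOn ℝ Set.univ (fun U => G U i)) {m u μ v : Fin N → ℝ}
    (hm : ∀ i, 0 < m i) (hμ : ∀ i, 0 < μ i) (hm0 : ∑ i, m i ≠ 0)
    (hsum : ∑ i, μ i = ∑ i, m i)
    (hstar1 : ∀ i, Ftilde1 k G μ v i = 0) (hstar2 : ∀ j, Ftilde2 G μ v j = 0) :
    ∑ j, μ j * Ftilde1 k G m u j - ∑ j, (u j - v j) * Ftilde2 G m u j ≤ 0 := by
  have hμF1 : ∑ j, μ j * Ftilde1 k G m u j
      = ∑ j, (μ j - m j) * (Ftilde1 k G m u j - Ftilde1 k G μ v j) := by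
    simp only [hstar1, sub_zero, sub_mul, sum_sub_distrib, sum_mul_Ftilde1_self m u hm0]
  have hF2 : -∑ j, (u j - v j) * Ftilde2 G m u j = ∑ j, (v j - u j) * Ftilde2 G m u j := by
    rw [← sum_neg_distrib]; exact sum_congr rfl fun _ _ => by ring
  have hmG := sum_sub_mul_Ftilde2_le (hG u) hconv (fun i => (hm i).le) v
  have hμG := sum_sub_mul_Ftilde2_le (hG v) hconv (fun i => (hμ i).le) u
  simp only [hstar2, mul_zero, sum_const_zero] at hμG
  have hlog : ∑ i, (μ i - m i) * ((1 / k) * (log (m i) - log (μ i))) ≤ 0 := by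
    refine sum_nonpos fun i _ => ?_
    have := mul_nonneg (one_div_pos.2 hk).le (sub_mul_log_sub_log_nonneg (hm i) (hμ i))
    linarith
  have hexpand : ∑ i, (μ i - m i) * (G v i - G u i + (1 / k) * (log (m i) - log (μ i)))
      = -∑ i, μ i * (G u i - G v i) - ∑ i, m i * (G v i - G u i)
        + ∑ i, (μ i - m i) * ((1 / k) * (log (m i) - log (μ i))) := by
    rw [← sum_neg_distrib, ← sum_sub_distrib, ← sum_add_distrib]
    exact sum_congr rfl fun _ _ => by ring
  rw [sub_eq_add_neg, hF2, hμF1, sum_sub_mul_Ftilde1_sub hsum, hexpand]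
  linarith

noncomputable def lyapunov (Mstar Ustar M U : Fin N → ℝ) : ℝ :=
  (1 / (N : ℝ)) * ∑ j, Mstar j * log (Mstar j / M j)
    + (1 / (2 * (N : ℝ))) * ∑ j, (U j - Ustar j) ^ 2

theorem lyapunov_nonneg {Mstar M : Fin N → ℝ} (hMstar : ∀ j, 0 ≤ Mstar j) (hM : ∀ j, 0 < M j)
    (hsum : ∑ j, Mstar j = ∑ j, M j) (Ustar U : Fin N → ℝ) : 0 ≤ lyapunov Mstar Ustar M U := by
  have hgibbs : 0 ≤ ∑ j, Mstar j * log (Mstar j / M j) := by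
    have := sum_le_sum fun j (_ : j ∈ univ) => sub_le_mul_log_div (hMstar j) (hM j)
    rwa [sum_sub_distrib, hsum, sub_self] at this
  unfold lyapunov
  positivity

theorem hasDerivAt_lyapunov {Mstar Ustar : Fin N → ℝ} (hMstar : ∀ j, Mstar j ≠ 0)
    {M U : ℝ → Fin N → ℝ} {t : ℝ} (hM0 : ∀ i, M t i ≠ 0)
    (hM : ∀ i, HasDerivAt (fun s => M s i) (-(Fbar1 k G (M t) (U t) i)) t)
    (hU : ∀ i, HasDerivAt (fun s => U s i) (-(Ftilde2 G (M t) (U t) i)) t) :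
    HasDerivAt (fun s => lyapunov Mstar Ustar (M s) (U s))
      ((1 / (N : ℝ)) * (∑ j, Mstar j * Ftilde1 k G (M t) (U t) j
        - ∑ j, (U t j - Ustar j) * Ftilde2 G (M t) (U t) j)) t := by
  have hent := HasDerivAt.fun_sum fun j (_ : j ∈ univ) =>
    (hM j).const_mul_log_const_div (hMstar j) (hM0 j)
  have hsq := HasDerivAt.fun_sum fun j (_ : j ∈ univ) => ((hU j).sub_const (Ustar j)).pow 2
  refine ((hent.const_mul _).add (hsq.const_mul _)).congr_deriv ?_
  simp only [Fbar1, mul_sub, mul_sum, ← sum_add_distrib, ← sum_sub_distrib]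
  refine sum_congr rfl fun j _ => ?_
  field_simp [hM0 j]
  ring

end Flow

theorem discrete_HRF_lyapunov_nonneg_antitone_general
    (N : ℕ) (k : ℝ) (hk : 0 < k)
    (G : (Fin N → ℝ) → (Fin N → ℝ))
    (hGdiff : Differentiable ℝ G)
    (hGconv : ∀ i : Fin N, ConvexOn ℝ Set.univ (fun U => G U i))
    (T : ℝ)
    (M U : ℝ → Fin N → ℝ)
    (hflowM : ∀ t ∈ Set.Ico (0 : ℝ) T, ∀ i,
      HasDerivAt (fun s => M s i) (-(Fbar1 k G (M t) (U t) i)) t)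
    (hflowU : ∀ t ∈ Set.Ico (0 : ℝ) T, ∀ i,
      HasDerivAt (fun s => U s i) (-(Ftilde2 G (M t) (U t) i)) t)
    (hMpos : ∀ t ∈ Set.Ico (0 : ℝ) T, ∀ i, 0 < M t i)
    (hmass : ∀ t ∈ Set.Ico (0 : ℝ) T, (1 / (N : ℝ)) * ∑ j, M t j = 1)
    (Mstar Ustar : Fin N → ℝ)
    (hMstarpos : ∀ j, 0 < Mstar j)
    (hstarmass : (1 / (N : ℝ)) * ∑ j, Mstar j = 1)
    (hstar1 : ∀ i, Ftilde1 k G Mstar Ustar i = 0)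
    (hstar2 : ∀ j, Ftilde2 G Mstar Ustar j = 0) :
    (∀ t ∈ Set.Ico (0 : ℝ) T,
      0 ≤ (1 / (N : ℝ)) * ∑ j, Mstar j * Real.log (Mstar j / M t j)
          + (1 / (2 * (N : ℝ))) * ∑ j, (U t j - Ustar j) ^ 2) ∧
    AntitoneOn (fun t =>
      (1 / (N : ℝ)) * ∑ j, Mstar j * Real.log (Mstar j / M t j)
        + (1 / (2 * (N : ℝ))) * ∑ j, (U t j - Ustar j) ^ 2)
      (Set.Ico (0 : ℝ) T) := by
  have hsum : ∀ t ∈ Set.Ico (0 : ℝ) T, ∑ j, Mstar j = ∑ j, M t j := fun t ht =>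
    mul_left_cancel₀ (left_ne_zero_of_mul_eq_one hstarmass) (hstarmass.trans (hmass t ht).symm)
  have hderiv := fun t (ht : t ∈ Set.Ico (0 : ℝ) T) =>
    hasDerivAt_lyapunov (Ustar := Ustar) (fun j => (hMstarpos j).ne')
      (fun i => (hMpos t ht i).ne') (hflowM t ht) (hflowU t ht)
  refine ⟨fun t ht => lyapunov_nonneg (fun j => (hMstarpos j).le) (hMpos t ht) (hsum t ht) _ _,
    antitoneOn_of_hasDerivWithinAt_nonpos (convex_Ico 0 T)
      (fun t ht => (hderiv t ht).continuousAt.continuousWithinAt)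
      (fun t ht => (hderiv t (interior_subset ht)).hasDerivWithinAt) fun t ht => ?_⟩
  have ht := interior_subset ht
  exact mul_nonpos_of_nonneg_of_nonpos (by positivity)
    (sum_mul_Ftilde1_sub_sum_mul_Ftilde2_nonpos hk hGdiff hGconv (hMpos t ht) hMstarpos
      (right_ne_zero_of_mul_eq_one (hmass t ht)) (hsum t ht) hstar1 hstar2)

/-- the Lyapunov function
`φ̄(t) = (1/N)∑ⱼ m*ⱼ ln(m*ⱼ/mⱼ(t)) + (1/2N)∑ⱼ (uⱼ(t) − u*ⱼ)²`
is nonnegative and nonincreasing along a positive, mass-one solution of the discrete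
Hessian Riemannian flow, where `(M*,U*)` is a positive mass-one solution of `F̃ = 0`. -/
theorem discrete_HRF_lyapunov_nonneg_antitone
    (N : ℕ) (hN : 1 ≤ N) (k : ℝ) (hk : 0 < k)
    (G : (Fin N → ℝ) → (Fin N → ℝ))
    (hGdiff : Differentiable ℝ G)
    (hGconv : ∀ i : Fin N, ConvexOn ℝ Set.univ (fun U => G U i))
    (T : ℝ)
    (M U : ℝ → Fin N → ℝ)
    (hflowM : ∀ t ∈ Set.Ico (0 : ℝ) T, ∀ i,
      HasDerivAt (fun s => M s i) (-(Fbar1 k G (M t) (U t) i)) t)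
    (hflowU : ∀ t ∈ Set.Ico (0 : ℝ) T, ∀ i,
      HasDerivAt (fun s => U s i) (-(Ftilde2 G (M t) (U t) i)) t)
    (hMpos : ∀ t ∈ Set.Ico (0 : ℝ) T, ∀ i, 0 < M t i)
    (hmass : ∀ t ∈ Set.Ico (0 : ℝ) T, (1 / (N : ℝ)) * ∑ j, M t j = 1)
    (Mstar Ustar : Fin N → ℝ)
    (hMstarpos : ∀ j, 0 < Mstar j)
    (hstarmass : (1 / (N : ℝ)) * ∑ j, Mstar j = 1)
    (hstar1 : ∀ i, Ftilde1 k G Mstar Ustar i = 0)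
    (hstar2 : ∀ j, Ftilde2 G Mstar Ustar j = 0) :
    (∀ t ∈ Set.Ico (0 : ℝ) T,
      0 ≤ (1 / (N : ℝ)) * ∑ j, Mstar j * Real.log (Mstar j / M t j)
          + (1 / (2 * (N : ℝ))) * ∑ j, (U t j - Ustar j) ^ 2) ∧
    AntitoneOn (fun t =>
      (1 / (N : ℝ)) * ∑ j, Mstar j * Real.log (Mstar j / M t j)
        + (1 / (2 * (N : ℝ))) * ∑ j, (U t j - Ustar j) ^ 2)
      (Set.Ico (0 : ℝ) T) :=
  discrete_HRF_lyapunov_nonneg_antitone_general N k hk G hGdiff hGconv T M U hflowM hflowU hMpos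
    hmass Mstar Ustar hMstarpos hstarmass hstar1 hstar2
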